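/- For every natural number n, the game G_n over L5 is monotone. -/

import Mathlib

universe u

/-- Pre-games (removed from Mathlib; restored here with their old definition). -/
inductive SetTheory.PGame : Type (u + 1)
  | mk : ∀ α β : Type u, (α → SetTheory.PGame) → (β → SetTheory.PGame) → SetTheory.PGame

/-- The pre-game `0 = { | }`, as in the old Mathlib. -/
instance SetTheory.PGame.instZeroPGame : Zero SetTheory.PGame :=
  ⟨⟨PEmpty, PEmpty, PEmpty.elim, PEmpty.elim⟩⟩

/-- Combinatorial games over a poset `A` of atoms: either an atomic game `[a]` for an atom
`a : A`, or a composite game `⟨L|R⟩` where `L` and `R` are nonempty families of games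
(the left and right options). -/
inductive PoGame (A : Type u) : Type (u + 1) where
  | atom : A → PoGame A
  | mk : (xl xr : Type u) → (xl → PoGame A) → (xr → PoGame A) →
      Nonempty xl → Nonempty xr → PoGame A

namespace PoGame

variable {A : Type u}

/-- `G` is an atomic game. -/
def IsAtomic : PoGame A → Prop
  | atom _ => True
  | mk _ _ _ _ _ _ => False

/-- `G` is a left option of the game given as second argument. -/
def IsLeftOption (G : PoGame A) : PoGame A → Prop
  | atom _ => False
  | mk _ _ L _ _ _ => ∃ i, L i = G

/-- `G` is a right option of the game given as second argument. -/
def IsRightOption (G : PoGame A) : PoGame A → Prop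
  | atom _ => False
  | mk _ _ _ R _ _ => ∃ j, R j = G

section Order

variable [PartialOrder A]

mutual
  /-- `Le G H` is the relation `G ≤ H` on games over the poset `A`, defined by mutual
  recursion with `Lf` (the relation `G ⊲ H`): `G ≤ H` iff every left option `G^L`
  satisfies `G^L ⊲ H`, every right option `H^R` satisfies `G ⊲ H^R`, and if `G` or `H`
  is atomic then `G ⊲ H`. -/
  inductive Le : PoGame A → PoGame A → Prop
    | intro (G H : PoGame A)
        (hL : ∀ G', IsLeftOption G' G → Lf G' H)
        (hR : ∀ H', IsRightOption H' H → Lf G H')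
        (hA : IsAtomic G ∨ IsAtomic H → Lf G H) : Le G H

  /-- `Lf G H` is the relation `G ⊲ H` on games over the poset `A`: it holds iff some
  right option `G^R` satisfies `G^R ≤ H`, or some left option `H^L` satisfies `G ≤ H^L`,
  or `G = [a]` and `H = [b]` are atomic with `a ≤ b` in `A`. -/
  inductive Lf : PoGame A → PoGame A → Prop
    | rightOption (G H G' : PoGame A) (h : IsRightOption G' G) (hle : Le G' H) : Lf G H
    | leftOption (G H H' : PoGame A) (h : IsLeftOption H' H) (hle : Le G H') : Lf G H
    | atom (a b : A) (hab : a ≤ b) : Lf (atom a) (atom b)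
end

/-- Two games are equivalent if `G ≤ H` and `H ≤ G`. -/
def GEquiv (G H : PoGame A) : Prop := Le G H ∧ Le H G

/-- `G` is locally monotone if `G ≤ G^L` for every left option `G^L` and `G^R ≤ G` for
every right option `G^R`. -/
def LocallyMonotone (G : PoGame A) : Prop :=
  (∀ G', IsLeftOption G' G → Le G G') ∧ (∀ G', IsRightOption G' G → Le G' G)

/-- `G` is an option (left or right) of `H`. -/
def IsOption (G H : PoGame A) : Prop := IsLeftOption G H ∨ IsRightOption G H

/-- `G` is a position of `H`: `H` itself, an option of `H`, an option of an option, etc. -/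
def IsPosition (G H : PoGame A) : Prop := Relation.ReflTransGen IsOption G H

/-- `G` is monotone if every position of `G` is locally monotone. -/
def Monotone (G : PoGame A) : Prop := ∀ K, IsPosition K G → LocallyMonotone K

end Order

/-- The 5-element linearly ordered set `L5 = {-3, -2, -1, 0, 1}`. -/
abbrev L5 : Type := {a : ℤ // -3 ≤ a ∧ a ≤ 1}

/-- `G` has mean `C`: an atomic game `[a]` has mean `a`, and a composite game has mean `C`
iff every left option has mean `C + 1` and every right option has mean `C - 1`. -/
def HasMean : PoGame L5 → ℤ → Prop
  | atom a, C => (a : ℤ) = C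
  | mk _ _ L R _ _, C => (∀ i, HasMean (L i) (C + 1)) ∧ (∀ j, HasMean (R j) (C - 1))

/-- The game `⟨G | H⟩` with a single left option `G` and a single right option `H`. -/
def ofPair (G H : PoGame A) : PoGame A :=
  mk PUnit PUnit (fun _ => G) (fun _ => H) ⟨PUnit.unit⟩ ⟨PUnit.unit⟩

/-- `⋆ = ⟨-1 | -3⟩`. -/
def star : PoGame L5 := ofPair (atom ⟨-1, by norm_num⟩) (atom ⟨-3, by norm_num⟩)

/-- `M(G) = ⟨1 | G⟩`. -/
def M (G : PoGame L5) : PoGame L5 := ofPair (atom ⟨1, by norm_num⟩) G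

/-- `P(G) = ⟨G | -2⟩`. -/
def P (G : PoGame L5) : PoGame L5 := ofPair G (atom ⟨-2, by norm_num⟩)

/-- `P⋆(G) = ⟨G | ⋆⟩`. -/
def Pstar (G : PoGame L5) : PoGame L5 := ofPair G star

/-- `Pn n G = P G` if `n` is odd, `P⋆ G` if `n` is even. -/
def Pn (n : ℕ) (G : PoGame L5) : PoGame L5 := if Odd n then P G else Pstar G

/-- The sequence `G_0 = [0]`, `G_{n+1} = M (Pn n (G_n))`. -/
def Gseq : ℕ → PoGame L5
  | 0 => atom ⟨0, by norm_num⟩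
  | n + 1 => M (Pn n (Gseq n))

/-- The normal-play game obtained from a game over `L5` by replacing every atom by the
normal-play game `0 = { | }`, keeping the tree of left and right options. -/
def np : PoGame L5 → SetTheory.PGame.{0}
  | atom _ => 0
  | mk xl xr L R _ _ => SetTheory.PGame.mk xl xr (fun i => np (L i)) (fun j => np (R j))

end PoGame

/-!
Write `X_n` for the right option of `Pn n`, so that `G_{n+1} = ⟨1 | ⟨G_n | X_n⟩⟩` with
`X_n ∈ {-2, ⋆}`. A game `⟨G | H⟩` is monotone as soon as `G` and `H` are and
`⟨G | H⟩ ≤ G`, `H ≤ ⟨G | H⟩`, so by induction on `n` it suffices to check four inequalities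
between concrete games. No transitivity of `≤` is available, so each of them is verified
directly from the recursive definition, using the invariants `[a] ≤ G_n` for `a ≤ 0` and
`G_n ≤ [1]`. The key one, `⟨G_{n+1} | X_{n+1}⟩ ≤ G_{n+1}`, reduces to
`X_{n+1} ≤ ⟨G_n | X_n⟩`, which holds for either choice of `X_{n+1}` and `X_n`.
-/

namespace PoGame

section Generic

variable {A : Type u}

lemma not_isOption_atom {K : PoGame A} {a : A} : ¬ IsOption K (atom a) := by
  rintro (h | h) <;> exact h

lemma isLeftOption_ofPair {G H K : PoGame A} : IsLeftOption K (ofPair G H) ↔ K = G :=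
  ⟨fun ⟨_, h⟩ => h.symm, fun h => ⟨PUnit.unit, h.symm⟩⟩

lemma isRightOption_ofPair {G H K : PoGame A} : IsRightOption K (ofPair G H) ↔ K = H :=
  ⟨fun ⟨_, h⟩ => h.symm, fun h => ⟨PUnit.unit, h.symm⟩⟩

lemma isPosition_atom {K : PoGame A} {a : A} (h : IsPosition K (atom a)) : K = atom a := by
  rcases h.cases_tail with h | ⟨_, _, hstep⟩
  · exact h.symm
  · exact absurd hstep not_isOption_atom

lemma isPosition_ofPair {G H K : PoGame A} (h : IsPosition K (ofPair G H)) :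
    K = ofPair G H ∨ IsPosition K G ∨ IsPosition K H := by
  rcases h.cases_tail with h | ⟨_, hc, hl | hr⟩
  · exact Or.inl h.symm
  · exact Or.inr (Or.inl (isLeftOption_ofPair.1 hl ▸ hc))
  · exact Or.inr (Or.inr (isRightOption_ofPair.1 hr ▸ hc))

variable [PartialOrder A]

lemma lf_of_le_atom {G : PoGame A} {b : A} (h : Le G (atom b)) : Lf G (atom b) := by
  cases h with
  | intro _ _ _ _ hA => exact hA (Or.inr trivial)

lemma lf_ofPair {X G H : PoGame A} (h : Le X G) : Lf X (ofPair G H) :=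
  Lf.leftOption _ _ G ⟨PUnit.unit, rfl⟩ h

lemma ofPair_lf {G H Y : PoGame A} (h : Le H Y) : Lf (ofPair G H) Y :=
  Lf.rightOption _ _ H ⟨PUnit.unit, rfl⟩ h

lemma atom_le_atom {a b : A} (h : a ≤ b) : Le (atom a) (atom b) :=
  Le.intro _ _ (fun _ h' => h'.elim) (fun _ h' => h'.elim) (fun _ => Lf.atom a b h)

lemma atom_le_ofPair {a : A} {G H : PoGame A} (hG : Le (atom a) G) (hH : Lf (atom a) H) :
    Le (atom a) (ofPair G H) :=
  Le.intro _ _ (fun _ h' => h'.elim) (fun _ h' => isRightOption_ofPair.1 h' ▸ hH)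
    (fun _ => lf_ofPair hG)

lemma ofPair_le_atom {G H : PoGame A} {b : A} (hG : Lf G (atom b)) (hH : Le H (atom b)) :
    Le (ofPair G H) (atom b) :=
  Le.intro _ _ (fun _ h' => isLeftOption_ofPair.1 h' ▸ hG) (fun _ h' => h'.elim)
    (fun _ => ofPair_lf hH)

lemma ofPair_le_ofPair {G H G' H' : PoGame A} (hG : Lf G (ofPair G' H'))
    (hH : Lf (ofPair G H) H') : Le (ofPair G H) (ofPair G' H') :=
  Le.intro _ _ (fun _ h' => isLeftOption_ofPair.1 h' ▸ hG)
    (fun _ h' => isRightOption_ofPair.1 h' ▸ hH) (by rintro (h | h) <;> exact h.elim)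

lemma monotone_atom (a : A) : PoGame.Monotone (atom a) := by
  intro K hK
  rw [isPosition_atom hK]
  exact ⟨fun _ h => h.elim, fun _ h => h.elim⟩

lemma monotone_ofPair {G H : PoGame A} (hG : PoGame.Monotone G) (hH : PoGame.Monotone H)
    (hleG : Le (ofPair G H) G) (hleH : Le H (ofPair G H)) : PoGame.Monotone (ofPair G H) := by
  intro K hK
  rcases isPosition_ofPair hK with rfl | hK | hK
  · exact ⟨fun _ h => isLeftOption_ofPair.1 h ▸ hleG, fun _ h => isRightOption_ofPair.1 h ▸ hleH⟩
  · exact hG K hK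
  · exact hH K hK

end Generic

abbrev atom5 (a : ℤ) (h : -3 ≤ a ∧ a ≤ 1 := by norm_num) : PoGame L5 := atom ⟨a, h⟩

lemma atom5_le_atom5 {a b : ℤ} {ha hb} (h : a ≤ b) : Le (atom5 a ha) (atom5 b hb) :=
  atom_le_atom h

lemma atom5_lf_atom5 {a b : ℤ} {ha hb} (h : a ≤ b) : Lf (atom5 a ha) (atom5 b hb) :=
  Lf.atom _ _ h

def PnRight (n : ℕ) : PoGame L5 := if Odd n then atom5 (-2) else star

lemma Pn_eq_ofPair (n : ℕ) (G : PoGame L5) : Pn n G = ofPair G (PnRight n) := by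
  unfold Pn PnRight
  split <;> rfl

lemma Gseq_succ (n : ℕ) : Gseq (n + 1) = ofPair (atom5 1) (ofPair (Gseq n) (PnRight n)) := by
  rw [Gseq, M, Pn_eq_ofPair]

lemma monotone_PnRight (n : ℕ) : PoGame.Monotone (PnRight n) := by
  unfold PnRight
  split
  · exact monotone_atom _
  · exact monotone_ofPair (monotone_atom _) (monotone_atom _)
      (ofPair_le_atom (atom5_lf_atom5 le_rfl) (atom5_le_atom5 (by norm_num)))
      (atom_le_ofPair (atom5_le_atom5 (by norm_num)) (atom5_lf_atom5 le_rfl))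

lemma PnRight_le_atom5 (n : ℕ) {b : ℤ} {hb} (h : -1 ≤ b) : Le (PnRight n) (atom5 b hb) := by
  unfold PnRight
  split
  · exact atom5_le_atom5 (by omega)
  · exact ofPair_le_atom (atom5_lf_atom5 h) (atom5_le_atom5 (by omega))

lemma Gseq_le_one (n : ℕ) : Le (Gseq n) (atom5 1) := by
  induction n with
  | zero => exact atom5_le_atom5 (by norm_num)
  | succ n ih =>
    rw [Gseq_succ]
    exact ofPair_le_atom (atom5_lf_atom5 le_rfl)
      (ofPair_le_atom (lf_of_le_atom ih) (PnRight_le_atom5 n (by norm_num)))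

lemma atom_le_Gseq {a : L5} (ha : (a : ℤ) ≤ 0) (n : ℕ) : Le (atom a) (Gseq n) := by
  induction n with
  | zero => exact atom_le_atom ha
  | succ n ih =>
    rw [Gseq_succ]
    exact atom_le_ofPair (atom_le_atom a.2.2) (lf_ofPair ih)

lemma neg_two_lf_PnRight (n : ℕ) : Lf (atom5 (-2)) (PnRight n) := by
  unfold PnRight
  split
  · exact atom5_lf_atom5 le_rfl
  · exact lf_ofPair (atom5_le_atom5 (by norm_num))

lemma neg_three_le_PnRight (n : ℕ) : Le (atom5 (-3)) (PnRight n) := by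
  unfold PnRight
  split
  · exact atom5_le_atom5 (by norm_num)
  · exact atom_le_ofPair (atom5_le_atom5 (by norm_num)) (atom5_lf_atom5 le_rfl)

lemma PnRight_le_Pn_Gseq (k n : ℕ) : Le (PnRight k) (ofPair (Gseq n) (PnRight n)) := by
  unfold PnRight
  split
  · exact atom_le_ofPair (atom_le_Gseq (by norm_num) n) (neg_two_lf_PnRight n)
  · exact ofPair_le_ofPair (lf_ofPair (atom_le_Gseq (by norm_num) n))
      (ofPair_lf (neg_three_le_PnRight n))

lemma Pn_Gseq_le_Gseq (n : ℕ) : Le (ofPair (Gseq n) (PnRight n)) (Gseq n) := by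
  cases n with
  | zero => exact ofPair_le_atom (atom5_lf_atom5 le_rfl) (PnRight_le_atom5 0 (by norm_num))
  | succ m =>
    rw [Gseq_succ]
    exact ofPair_le_ofPair (lf_ofPair (Gseq_succ m ▸ Gseq_le_one (m + 1)))
      (ofPair_lf (PnRight_le_Pn_Gseq (m + 1) m))

lemma Pn_Gseq_le_Gseq_succ (n : ℕ) :
    Le (ofPair (Gseq n) (PnRight n)) (ofPair (atom5 1) (ofPair (Gseq n) (PnRight n))) :=
  ofPair_le_ofPair (lf_ofPair (Gseq_le_one n)) (lf_ofPair (Pn_Gseq_le_Gseq n))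

end PoGame

open PoGame in
/-- For every natural number `n`, the game `G_n` is monotone. -/
theorem stmt_3 (n : ℕ) : PoGame.Monotone (Gseq n) := by
  induction n with
  | zero => exact monotone_atom _
  | succ n ih =>
    have hPn : PoGame.Monotone (ofPair (Gseq n) (PnRight n)) :=
      monotone_ofPair ih (monotone_PnRight n) (Pn_Gseq_le_Gseq n) (PnRight_le_Pn_Gseq n n)
    rw [Gseq_succ]
    exact monotone_ofPair (monotone_atom _) hPn (Gseq_succ n ▸ Gseq_le_one (n + 1))
      (Pn_Gseq_le_Gseq_succ n)
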